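/- arXiv:0910.0499 — 2 statements merged into one kernel-verified Lean document; each statement's English description precedes it below -/
import Mathlib

section
/- Fix n ≥ 3 and K ≤ P. Partition nodes 1,…,n into k+1 disjoint triples with k = ⌊(n−3)/3⌋. Then the probability that the random key graph K(n; K,P) contains no triangle is at most (1 − (1−q(K,P))³)^{k+1} ≤ exp(−(k+1)(1−q(K,P))³). -/
open Finset Filter

/-- `q(K,P) = C(P-K,K)/C(P,K)` if `2K ≤ P`, else 0. -/
noncomputable def qKP (K P : ℕ) : ℝ :=
  if 2 * K ≤ P then ((P - K).choose K : ℝ) / (P.choose K) else 0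

/-- Sample space of the random key graph: assignments of a `K`-subset of the key pool
`Fin P` to each of the `n` nodes (all equally likely). -/
def keySpace (n K P : ℕ) : Finset (Fin n → Finset (Fin P)) :=
  Fintype.piFinset (fun _ => Finset.univ.powersetCard K)

/-- The key assignment `f` contains a triangle: three distinct nodes with pairwise
intersecting key rings. -/
def hasTriangle (n P : ℕ) (f : Fin n → Finset (Fin P)) : Prop :=
  ∃ i j k : Fin n, i ≠ j ∧ i ≠ k ∧ j ≠ k ∧
    (f i ∩ f j).Nonempty ∧ (f i ∩ f k).Nonempty ∧ (f j ∩ f k).Nonempty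

instance (n P : ℕ) (f : Fin n → Finset (Fin P)) : Decidable (hasTriangle n P f) := by
  unfold hasTriangle; infer_instance

/-!
Split the nodes into `k + 1 = ⌊(n - 3) / 3⌋ + 1` disjoint triples and the remaining nodes. A
triangle-free key assignment stays triangle-free on every block and the blocks carry independent
key rings, so the number of triangle-free assignments is submultiplicative over blocks and the
no-triangle probability is at most `(1 - β) ^ (k + 1)`, where `β` is the probability that three
independent uniform `K`-subsets of `Fin P` pairwise intersect.

With `M = C(P, K)`, `D = C(P - K, K)` and `D₂ = C(P - 2K, K)`, inclusion–exclusion over the three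
disjointness events gives `β M³ = M ((M - D) (M - 2D) + D (D - D₂))`, and the log-concavity
`D₂ M ≤ D²` of binomial coefficients turns this into `β ≥ (1 - D / M)³ = (1 - q)³`. The exponential
bound is `1 - x ≤ exp (-x)`.
-/

theorem Nat.choose_sub_sub_mul_choose_le_sq (m K : ℕ) :
    (m - K - K).choose K * m.choose K ≤ (m - K).choose K ^ 2 := by
  have hdesc : (m - K - K).descFactorial K * m.descFactorial K ≤ (m - K).descFactorial K ^ 2 := by
    simp only [Nat.descFactorial_eq_prod_range, sq, ← prod_mul_distrib]
    -- factorwise `(a - K) * (a + K) ≤ a ^ 2` with `a = m - K - i`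
    refine prod_le_prod' fun i _ => ?_
    rcases le_or_gt K (m - K - i) with h | h
    · obtain ⟨b, hb⟩ : ∃ b, m - K - i = b + K := ⟨m - K - i - K, by omega⟩
      rw [show m - K - K - i = b by omega, show m - i = b + 2 * K by omega, hb]
      nlinarith
    · simp [show m - K - K - i = 0 by omega]
  simp only [Nat.descFactorial_eq_factorial_mul_choose] at hdesc
  refine Nat.le_of_mul_le_mul_left ?_ (by positivity : 0 < K.factorial ^ 2)
  linarith

section DisjointCount

variable {α : Type*} [Fintype α] [DecidableEq α]

theorem card_powersetCard_filter_disjoint (K : ℕ) (v : Finset α) :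
    #{u ∈ (univ : Finset α).powersetCard K | Disjoint u v} = (Fintype.card α - #v).choose K := by
  have : {u ∈ (univ : Finset α).powersetCard K | Disjoint u v} = vᶜ.powersetCard K := by
    ext u
    simp [mem_powersetCard, subset_compl_iff_disjoint_right, and_comm]
  rw [this, card_powersetCard, card_compl]

local notation "χ" s:max t:max => ite (Disjoint s t) (1 : ℝ) 0

theorem sum_powersetCard_disjoint_indicator (K : ℕ) (v : Finset α) :
    ∑ u ∈ (univ : Finset α).powersetCard K, χ v u = (Fintype.card α - #v).choose K := by
  simp_rw [disjoint_comm (a := v)]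
  rw [sum_boole, card_powersetCard_filter_disjoint]

theorem sum_sum_meet_indicator {K : ℕ} {s : Finset α} (hs : #s = K) :
    ∑ t ∈ (univ : Finset α).powersetCard K, ∑ u ∈ (univ : Finset α).powersetCard K,
        (1 - χ s t) * (1 - χ s u) * (1 - χ t u) =
      let M : ℝ := (Fintype.card α).choose K
      let D : ℝ := (Fintype.card α - K).choose K
      (M - D) * (M - 2 * D) + D * (D - (Fintype.card α - K - K).choose K) := by
  set A := (univ : Finset α).powersetCard K
  have hA : ∀ v ∈ A, #v = K := fun v hv => (mem_powersetCard.mp hv).2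
  have hsum_one : ∑ _v ∈ A, (1 : ℝ) = (Fintype.card α).choose K := by
    simp [A, card_powersetCard]
  have hsum_left (v : Finset α) (hv : #v = K) :
      ∑ u ∈ A, χ v u = (Fintype.card α - K).choose K := by
    rw [sum_powersetCard_disjoint_indicator, hv]
  have hsum_right (v : Finset α) (hv : #v = K) :
      ∑ u ∈ A, χ u v = (Fintype.card α - K).choose K := by
    simp_rw [disjoint_comm (b := v)]; exact hsum_left v hv
  have hunion (t u : Finset α) : χ s u * χ t u = χ (s ∪ t) u := by
    by_cases h₁ : Disjoint s u <;> by_cases h₂ : Disjoint t u <;> simp [h₁, h₂]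
  have hsplit (t u : Finset α) : (1 - χ s t) * (1 - χ s u) * (1 - χ t u) =
      (1 - χ s t) * (1 - χ s u - χ t u) + χ s u * χ t u - χ s t * χ (s ∪ t) u := by
    rw [← hunion]; ring
  have h₁ : ∑ t ∈ A, ∑ u ∈ A, (1 - χ s t) * (1 - χ s u - χ t u) =
      ((Fintype.card α).choose K - (Fintype.card α - K).choose K : ℝ) *
        ((Fintype.card α).choose K - 2 * (Fintype.card α - K).choose K) := by
    simp_rw [← mul_sum, sum_sub_distrib, hsum_one, hsum_left s hs]
    rw [sum_congr rfl fun t ht => by rw [hsum_left t (hA t ht)], ← sum_mul, sum_sub_distrib,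
      hsum_one, hsum_left s hs]
    ring
  have h₂ : ∑ t ∈ A, ∑ u ∈ A, χ s u * χ t u =
      ((Fintype.card α - K).choose K : ℝ) * (Fintype.card α - K).choose K := by
    rw [sum_comm]
    simp_rw [← mul_sum]
    rw [sum_congr rfl fun u hu => by rw [hsum_right u (hA u hu)], ← sum_mul, hsum_left s hs]
  have htriple (t : Finset α) (ht : t ∈ A) :
      χ s t * ∑ u ∈ A, χ (s ∪ t) u = χ s t * (Fintype.card α - K - K).choose K := by
    by_cases h : Disjoint s t
    · rw [sum_powersetCard_disjoint_indicator, card_union_of_disjoint h, hs, hA t ht,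
        Nat.sub_sub]
    · simp [h]
  have h₃ : ∑ t ∈ A, ∑ u ∈ A, χ s t * χ (s ∪ t) u =
      ((Fintype.card α - K).choose K : ℝ) * (Fintype.card α - K - K).choose K := by
    simp_rw [← mul_sum]
    rw [sum_congr rfl htriple, ← sum_mul, hsum_left s hs]
  simp only [hsplit, sum_sub_distrib, sum_add_distrib, h₁, h₂, h₃]
  ring

theorem sub_choose_pow_three_le_card_pairwise_not_disjoint (K : ℕ) :
    let A := (univ : Finset α).powersetCard K
    (((Fintype.card α).choose K - (Fintype.card α - K).choose K : ℝ)) ^ 3 ≤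
      #{x ∈ A ×ˢ A ×ˢ A | ¬Disjoint x.1 x.2.1 ∧ ¬Disjoint x.1 x.2.2 ∧ ¬Disjoint x.2.1 x.2.2} := by
  intro A
  have hind (s t u : Finset α) :
      (if ¬Disjoint s t ∧ ¬Disjoint s u ∧ ¬Disjoint t u then (1 : ℝ) else 0) =
        (1 - χ s t) * (1 - χ s u) * (1 - χ t u) := by
    by_cases h₁ : Disjoint s t <;> by_cases h₂ : Disjoint s u <;> by_cases h₃ : Disjoint t u <;>
      simp [h₁, h₂, h₃]
  rw [card_filter, Nat.cast_sum]
  simp only [sum_product, Nat.cast_ite, Nat.cast_one, Nat.cast_zero, hind]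
  rw [sum_congr rfl fun s hs => sum_sum_meet_indicator (mem_powersetCard.mp hs).2]
  rw [sum_const, card_powersetCard, card_univ, nsmul_eq_mul]
  set M : ℝ := ↑((Fintype.card α).choose K)
  set D : ℝ := ↑((Fintype.card α - K).choose K)
  set D₂ : ℝ := ↑((Fintype.card α - K - K).choose K)
  have hlogconc : D₂ * M ≤ D ^ 2 := by
    simp only [M, D, D₂]; exact_mod_cast Nat.choose_sub_sub_mul_choose_le_sq _ K
  have hD : 0 ≤ D := by positivity
  -- `M ((M - D) (M - 2D) + D (D - D₂)) - (M - D)³ = D (D² - M D₂)`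
  nlinarith [mul_le_mul_of_nonneg_left hlogconc hD]

end DisjointCount

theorem hasTriangle_of_comp {m n P : ℕ} {e : Fin m → Fin n} (he : Function.Injective e)
    {f : Fin n → Finset (Fin P)} (h : hasTriangle m P (f ∘ e)) : hasTriangle n P f := by
  obtain ⟨i, j, k, hij, hik, hjk, hij', hik', hjk'⟩ := h
  exact ⟨e i, e j, e k, he.ne hij, he.ne hik, he.ne hjk, hij', hik', hjk'⟩

theorem card_keySpace (n K P : ℕ) : #(keySpace n K P) = P.choose K ^ n := by
  simp [keySpace, Fintype.card_piFinset, card_powersetCard]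

def triangleFree (n K P : ℕ) : Finset (Fin n → Finset (Fin P)) :=
  {f ∈ keySpace n K P | ¬hasTriangle n P f}

theorem card_triangleFree_add_le (m l K P : ℕ) :
    #(triangleFree (m + l) K P) ≤ #(triangleFree m K P) * #(triangleFree l K P) := by
  rw [← card_product]
  refine card_le_card_of_injOn (fun f => (f ∘ Fin.castAdd l, f ∘ Fin.natAdd m)) ?_ ?_
  · intro f hf
    simp only [triangleFree, keySpace, coe_filter, Set.mem_ofPred_eq, Fintype.mem_piFinset] at hf
    simp only [triangleFree, keySpace, coe_product, coe_filter, Set.mem_prod, Set.mem_ofPred_eq,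
      Fintype.mem_piFinset, Function.comp_apply]
    exact ⟨⟨fun i => hf.1 _, fun h => hf.2 (hasTriangle_of_comp (Fin.castAdd_injective m l) h)⟩,
      fun i => hf.1 _, fun h => hf.2 (hasTriangle_of_comp (Fin.natAdd_injective l m) h)⟩
  · intro f _ g _ hfg
    obtain ⟨hl, hr⟩ := Prod.ext_iff.mp hfg
    rw [← Fin.append_castAdd_natAdd (f := f), ← Fin.append_castAdd_natAdd (f := g)]
    exact congrArg₂ Fin.append hl hr

theorem card_triangleFree_add_three_mul_le (r k K P : ℕ) :
    #(triangleFree (r + 3 * k) K P) ≤ P.choose K ^ r * #(triangleFree 3 K P) ^ k := by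
  induction k with
  | zero =>
    rw [mul_zero, add_zero, pow_zero, mul_one, ← card_keySpace]
    exact card_filter_le _ _
  | succ k ih =>
    calc #(triangleFree (r + 3 * (k + 1)) K P)
        ≤ #(triangleFree (r + 3 * k) K P) * #(triangleFree 3 K P) :=
          card_triangleFree_add_le (r + 3 * k) 3 K P
      _ ≤ P.choose K ^ r * #(triangleFree 3 K P) ^ k * #(triangleFree 3 K P) :=
          Nat.mul_le_mul_right _ ih
      _ = P.choose K ^ r * #(triangleFree 3 K P) ^ (k + 1) := by ring

theorem card_triangleFree_three_le (K P : ℕ) :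
    (#(triangleFree 3 K P) : ℝ) ≤ P.choose K ^ 3 - (P.choose K - (P - K).choose K) ^ 3 := by
  have hmeet : (((P.choose K - (P - K).choose K) ^ 3 : ℝ)) ≤
      #{f ∈ keySpace 3 K P | hasTriangle 3 P f} := by
    have := sub_choose_pow_three_le_card_pairwise_not_disjoint (α := Fin P) K
    simp only [Fintype.card_fin] at this
    refine this.trans (Nat.cast_le.mpr (card_le_card_of_injOn (fun x => ![x.1, x.2.1, x.2.2]) ?_ ?_))
    · intro x hx
      simp only [coe_filter, mem_product, Set.mem_ofPred_eq, not_disjoint_iff_nonempty_inter] at hx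
      simp only [keySpace, coe_filter, Set.mem_ofPred_eq, Fintype.mem_piFinset]
      refine ⟨fun i => by fin_cases i <;> simp [hx.1], 0, 1, 2, by decide, by decide, by decide, ?_⟩
      simpa using hx.2
    · intro x _ y _ hxy
      have h0 := congrFun hxy 0
      have h1 := congrFun hxy 1
      have h2 := congrFun hxy 2
      simp only [Matrix.cons_val_zero, Matrix.cons_val_one, Matrix.cons_val_two] at h0 h1 h2
      exact Prod.ext h0 (Prod.ext h1 h2)
  have hsplit := card_filter_add_card_filter_not (s := keySpace 3 K P) (hasTriangle 3 P)
  rw [card_keySpace] at hsplit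
  have : (#(triangleFree 3 K P) : ℝ) + #{f ∈ keySpace 3 K P | hasTriangle 3 P f} = P.choose K ^ 3 := by
    rw [triangleFree, add_comm]; exact_mod_cast hsplit
  linarith

theorem qKP_eq_div (K P : ℕ) : qKP K P = ((P - K).choose K : ℝ) / P.choose K := by
  unfold qKP
  split_ifs with h
  · rfl
  · rw [Nat.choose_eq_zero_of_lt (by omega : P - K < K)]
    simp

theorem card_triangleFree_three_div_le {K P : ℕ} (hKP : K ≤ P) :
    (#(triangleFree 3 K P) : ℝ) / P.choose K ^ 3 ≤ 1 - (1 - qKP K P) ^ 3 := by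
  have hM : (0 : ℝ) < P.choose K := by exact_mod_cast Nat.choose_pos hKP
  rw [qKP_eq_div, div_le_iff₀ (pow_pos hM 3)]
  calc (#(triangleFree 3 K P) : ℝ) ≤ P.choose K ^ 3 - (P.choose K - (P - K).choose K) ^ 3 :=
        card_triangleFree_three_le K P
    _ = _ := by field_simp

theorem card_triangleFree_div_card_keySpace_le {n k K P : ℕ} (hKP : K ≤ P) (hk : 3 * k ≤ n) :
    (#(triangleFree n K P) : ℝ) / #(keySpace n K P) ≤ (1 - (1 - qKP K P) ^ 3) ^ k := by
  obtain ⟨r, rfl⟩ : ∃ r, n = r + 3 * k := ⟨n - 3 * k, by omega⟩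
  have hM : (0 : ℝ) < P.choose K := by exact_mod_cast Nat.choose_pos hKP
  have h := card_triangleFree_add_three_mul_le r k K P
  calc (#(triangleFree (r + 3 * k) K P) : ℝ) / #(keySpace (r + 3 * k) K P)
      ≤ (P.choose K ^ r * #(triangleFree 3 K P) ^ k : ℕ) / (P.choose K ^ (r + 3 * k) : ℕ) := by
        rw [card_keySpace]; gcongr
    _ = ((#(triangleFree 3 K P) : ℝ) / P.choose K ^ 3) ^ k := by
        push_cast; rw [div_pow, pow_add, pow_mul]; field_simp
    _ ≤ (1 - (1 - qKP K P) ^ 3) ^ k := by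
        gcongr
        exact card_triangleFree_three_div_le hKP

theorem one_sub_pow_le_exp_neg_mul {x : ℝ} (hx : x ≤ 1) (k : ℕ) :
    (1 - x) ^ k ≤ Real.exp (-k * x) := by
  calc (1 - x) ^ k ≤ Real.exp (-x) ^ k := pow_le_pow_left₀ (by linarith) (Real.one_sub_le_exp_neg x) k
    _ = Real.exp (-k * x) := by rw [← Real.exp_nat_mul]; ring_nf

theorem no_triangle_probability_bound_general (n K P : ℕ) (hn : 3 ≤ n) (hKP : K ≤ P) :
    (((keySpace n K P).filter (fun f => ¬ hasTriangle n P f)).card : ℝ) /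
        ((keySpace n K P).card : ℝ)
      ≤ (1 - (1 - qKP K P) ^ 3) ^ ((n - 3) / 3 + 1) ∧
    (1 - (1 - qKP K P) ^ 3) ^ ((n - 3) / 3 + 1)
      ≤ Real.exp (-(((n - 3) / 3 + 1 : ℕ) : ℝ) * (1 - qKP K P) ^ 3) := by
  refine ⟨card_triangleFree_div_card_keySpace_le hKP (by omega), one_sub_pow_le_exp_neg_mul ?_ _⟩
  have h := card_triangleFree_three_div_le hKP
  have : (0 : ℝ) ≤ #(triangleFree 3 K P) / P.choose K ^ 3 := by positivity
  linarith

theorem no_triangle_probability_bound (n K P : ℕ) (hn : 3 ≤ n) (hK : 0 < K) (hKP : K ≤ P) :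
    (((keySpace n K P).filter (fun f => ¬ hasTriangle n P f)).card : ℝ) /
        ((keySpace n K P).card : ℝ)
      ≤ (1 - (1 - qKP K P) ^ 3) ^ ((n - 3) / 3 + 1) ∧
    (1 - (1 - qKP K P) ^ 3) ^ ((n - 3) / 3 + 1)
      ≤ Real.exp (-(((n - 3) / 3 + 1 : ℕ) : ℝ) * (1 - qKP K P) ^ 3) :=
  no_triangle_probability_bound_general n K P hn hKP
end

section
/- Let K, P : ℕ → ℕ be sequences with K_n ≤ P_n and K_n²/P_n → 0, and suppose n³·(K_n³/P_n² + (K_n²/P_n)³) → ∞. Then for any constants a, b > 0 with a − 3b + 1 ≥ 0, (1/n²)·(1 − q(K_n,P_n))^a / β(K_n,P_n)^b → 0 as n → ∞. -/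
open Filter

/-- `r(K,P) = C(P-2K,K)/C(P,K)` if `3K ≤ P`, else 0. -/
noncomputable def rKP (K P : ℕ) : ℝ :=
  if 3 * K ≤ P then ((P - 2 * K).choose K : ℝ) / (P.choose K) else 0

/-- `β(K,P) = (1-q)³ + q³ - q r`. -/
noncomputable def betaKP (K P : ℕ) : ℝ :=
  (1 - qKP K P) ^ 3 + (qKP K P) ^ 3 - qKP K P * rKP K P

/-!
Log-concavity of `m ↦ C(m, K)` gives `r ≤ q²`, hence `β ≥ (1 - q)³`, and since `a - 3b ≥ -1`
the ratio `(1 - q)^a / β^b` is at most `(1 - q)⁻¹`. Comparing `C(P-K, K) / C(P, K)` factor by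
factor gives `q ≤ (1 - K/P)^K`, which with Bernoulli's inequality yields `q (1 + x) ≤ 1` for
`x = K²/P`, i.e. `(1 - q)⁻¹ ≤ 1 + 1/x`. Finally `n³ (K³/P² + x³) ≤ (1 + n² x)³`, so the growth
hypothesis forces `n² x → ∞`, and `(1/n²)(1 + 1/x) = 1/n² + 1/(n² x) → 0`.
-/

namespace Nat

theorem descFactorial_sub_mul_pow_le (n k : ℕ) :
    (n - k).descFactorial k * n ^ k ≤ (n - k) ^ k * n.descFactorial k := by
  rw [descFactorial_eq_prod_range, descFactorial_eq_prod_range, Finset.pow_eq_prod_const,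
    Finset.pow_eq_prod_const, ← Finset.prod_mul_distrib, ← Finset.prod_mul_distrib]
  refine Finset.prod_le_prod' fun i _ => ?_
  rcases le_or_gt (n - k) i with hi | hi
  · simp [Nat.sub_eq_zero_of_le hi]
  · obtain ⟨d, rfl⟩ : ∃ d, n = k + i + d := ⟨n - k - i, by omega⟩
    rw [show k + i + d - k - i = d by omega, show k + i + d - k = i + d by omega,
      show k + i + d - i = k + d by omega]
    nlinarith [Nat.zero_le (i * k)]

theorem descFactorial_sub_mul_descFactorial_add_le_sq (m k : ℕ) :
    (m - k).descFactorial k * (m + k).descFactorial k ≤ m.descFactorial k ^ 2 := by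
  rw [descFactorial_eq_prod_range, descFactorial_eq_prod_range, descFactorial_eq_prod_range,
    ← Finset.prod_mul_distrib, ← Finset.prod_pow]
  refine Finset.prod_le_prod' fun i _ => ?_
  rcases le_or_gt (m - k) i with hi | hi
  · simp [Nat.sub_eq_zero_of_le hi]
  · obtain ⟨d, rfl⟩ : ∃ d, m = k + i + d := ⟨m - k - i, by omega⟩
    rw [show k + i + d - k - i = d by omega, show k + i + d + k - i = k + d + k by omega,
      show k + i + d - i = k + d by omega]
    nlinarith

theorem choose_sub_mul_pow_le (n k : ℕ) :
    (n - k).choose k * n ^ k ≤ (n - k) ^ k * n.choose k := by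
  have h := descFactorial_sub_mul_pow_le n k
  rw [descFactorial_eq_factorial_mul_choose, descFactorial_eq_factorial_mul_choose] at h
  exact Nat.le_of_mul_le_mul_left (by linarith) k.factorial_pos

theorem choose_sub_mul_choose_add_le_sq (m k : ℕ) :
    (m - k).choose k * (m + k).choose k ≤ m.choose k ^ 2 := by
  have h := descFactorial_sub_mul_descFactorial_add_le_sq m k
  rw [descFactorial_eq_factorial_mul_choose, descFactorial_eq_factorial_mul_choose,
    descFactorial_eq_factorial_mul_choose, mul_pow, mul_mul_mul_comm, ← sq] at h
  exact Nat.le_of_mul_le_mul_left h (by positivity)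

end Nat

theorem one_sub_pow_mul_one_add_mul_le_one {t : ℝ} (k : ℕ) (h0 : 0 ≤ t) (h1 : t ≤ 1) :
    (1 - t) ^ k * (1 + k * t) ≤ 1 :=
  calc (1 - t) ^ k * (1 + k * t) ≤ (1 - t) ^ k * (1 + t) ^ k :=
        mul_le_mul_of_nonneg_left (one_add_mul_le_pow (by linarith) k) (pow_nonneg (by linarith) k)
    _ = (1 - t ^ 2) ^ k := by rw [← mul_pow]; ring
    _ ≤ 1 := pow_le_one₀ (by nlinarith) (by nlinarith)

theorem Real.rpow_div_rpow_le_inv {u v a b : ℝ} (k : ℕ) (hu0 : 0 < u) (hu1 : u ≤ 1)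
    (huv : u ^ k ≤ v) (hb : 0 ≤ b) (hab : -1 ≤ a - k * b) : u ^ a / v ^ b ≤ u⁻¹ :=
  calc u ^ a / v ^ b ≤ u ^ a / (u ^ k) ^ b :=
        div_le_div_of_nonneg_left (rpow_nonneg hu0.le a) (rpow_pos_of_pos (pow_pos hu0 k) b)
          (rpow_le_rpow (pow_nonneg hu0.le k) huv hb)
    _ = u ^ (a - k * b) := by rw [← rpow_natCast, ← rpow_mul hu0.le, ← rpow_sub hu0]
    _ ≤ u ^ (-1 : ℝ) := rpow_le_rpow_of_exponent_ge hu0 hu1 hab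
    _ = u⁻¹ := rpow_neg_one u

theorem Filter.Tendsto.atTop_of_pow {α : Type*} {l : Filter α} {f : α → ℝ} {k : ℕ} (hk : k ≠ 0)
    (hf : ∀ x, 0 ≤ f x) (h : Tendsto (fun x => f x ^ k) l atTop) : Tendsto f l atTop :=
  ((tendsto_rpow_atTop (by positivity : (0 : ℝ) < (k : ℝ)⁻¹)).comp h).congr fun x =>
    Real.pow_rpow_inv_natCast (hf x) hk

theorem choose_sub_div_choose_le {K P : ℕ} (hP : 0 < P) (hKP : K ≤ P) :
    ((P - K).choose K : ℝ) / P.choose K ≤ (1 - (K : ℝ) / P) ^ K := by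
  have hc : (0 : ℝ) < P.choose K := by exact_mod_cast Nat.choose_pos hKP
  have hsub : 1 - (K : ℝ) / P = ((P - K : ℕ) : ℝ) / P := by
    rw [Nat.cast_sub hKP]; field_simp
  rw [hsub, div_pow, div_le_div_iff₀ hc (by positivity)]
  exact_mod_cast Nat.choose_sub_mul_pow_le P K

theorem qKP_nonneg (K P : ℕ) : 0 ≤ qKP K P := by
  unfold qKP; split_ifs <;> positivity

theorem qKP_lt_one {K P : ℕ} (hK : 0 < K) : qKP K P < 1 := by
  unfold qKP
  split_ifs with h
  · have hP : (0 : ℝ) < P := by exact_mod_cast (by omega : 0 < P)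
    have hKP : (K : ℝ) ≤ P := by exact_mod_cast (by omega : K ≤ P)
    exact (choose_sub_div_choose_le (by omega) (by omega)).trans_lt <|
      pow_lt_one₀ (by rw [sub_nonneg]; exact div_le_one_of_le₀ hKP hP.le)
        (sub_lt_self 1 (by positivity)) hK.ne'
  · exact zero_lt_one

theorem qKP_mul_one_add_le_one {K P : ℕ} (hK : 0 < K) : qKP K P * (1 + (K : ℝ) ^ 2 / P) ≤ 1 := by
  unfold qKP
  split_ifs with h
  · have hP : (0 : ℝ) < P := by exact_mod_cast (by omega : 0 < P)
    have hKP : (K : ℝ) ≤ P := by exact_mod_cast (by omega : K ≤ P)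
    have hx : (K : ℝ) ^ 2 / P = K * (K / P) := by ring
    calc ((P - K).choose K : ℝ) / P.choose K * (1 + (K : ℝ) ^ 2 / P)
        ≤ (1 - (K : ℝ) / P) ^ K * (1 + K * (K / P)) := by
          rw [hx]
          exact mul_le_mul_of_nonneg_right (choose_sub_div_choose_le (by omega) (by omega))
            (by positivity)
      _ ≤ 1 := one_sub_pow_mul_one_add_mul_le_one K (by positivity) (div_le_one_of_le₀ hKP hP.le)
  · simp

theorem inv_one_sub_qKP_le {K P : ℕ} (hK : 0 < K) :
    (1 - qKP K P)⁻¹ ≤ 1 + ((K : ℝ) ^ 2 / P)⁻¹ := by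
  rcases P.eq_zero_or_pos with rfl | hP
  · -- `q = 0` and `(K²/0)⁻¹ = 0`, so both sides are `1`
    simp [qKP, hK.ne']
  have hx : (0 : ℝ) < (K : ℝ) ^ 2 / P := by positivity
  have hq := qKP_mul_one_add_le_one (P := P) hK
  have h1q : 0 < 1 - qKP K P := sub_pos.2 (qKP_lt_one hK)
  have hqx : qKP K P ≤ (1 - qKP K P) / ((K : ℝ) ^ 2 / P) := by
    rw [le_div_iff₀ hx]; linarith [mul_add (qKP K P) 1 ((K : ℝ) ^ 2 / P)]
  rw [inv_le_iff_one_le_mul₀ h1q, add_mul, one_mul, inv_mul_eq_div]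
  linarith

theorem rKP_le_qKP_sq (K P : ℕ) : rKP K P ≤ qKP K P ^ 2 := by
  unfold rKP
  split_ifs with h3
  · have hc : (0 : ℝ) < P.choose K := by exact_mod_cast Nat.choose_pos (by omega)
    have hlc := Nat.choose_sub_mul_choose_add_le_sq (P - K) K
    rw [show P - K - K = P - 2 * K by omega, Nat.sub_add_cancel (by omega)] at hlc
    have hlc' : ((P - 2 * K).choose K : ℝ) * P.choose K ≤ ((P - K).choose K : ℝ) ^ 2 := by
      exact_mod_cast hlc
    rw [qKP, if_pos (by omega), div_pow, div_le_div_iff₀ hc (by positivity)]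
    nlinarith
  · positivity

theorem pow_three_one_sub_qKP_le_betaKP (K P : ℕ) : (1 - qKP K P) ^ 3 ≤ betaKP K P := by
  unfold betaKP
  nlinarith [mul_nonneg (qKP_nonneg K P) (sub_nonneg.2 (rKP_le_qKP_sq K P))]

theorem one_sub_qKP_rpow_div_betaKP_rpow_le {K P : ℕ} (hK : 0 < K) {a b : ℝ} (hb : 0 ≤ b)
    (hab : -1 ≤ a - 3 * b) : (1 - qKP K P) ^ a / betaKP K P ^ b ≤ 1 + ((K : ℝ) ^ 2 / P)⁻¹ :=
  (Real.rpow_div_rpow_le_inv 3 (sub_pos.2 (qKP_lt_one hK)) (sub_le_self _ (qKP_nonneg K P))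
    (pow_three_one_sub_qKP_le_betaKP K P) hb (by exact_mod_cast hab)).trans
    (inv_one_sub_qKP_le hK)

theorem natCast_pow_three_mul_le (n K P : ℕ) (hK : 0 < K) :
    (n : ℝ) ^ 3 * ((K : ℝ) ^ 3 / (P : ℝ) ^ 2 + ((K : ℝ) ^ 2 / P) ^ 3)
      ≤ (1 + (n : ℝ) ^ 2 * ((K : ℝ) ^ 2 / P)) ^ 3 := by
  set x := (K : ℝ) ^ 2 / P
  have hx : 0 ≤ x := by positivity
  have hKx : (K : ℝ) ^ 3 / (P : ℝ) ^ 2 ≤ x ^ 2 := by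
    rw [div_pow, ← pow_mul]
    gcongr
    · exact_mod_cast hK
    · norm_num
  have hn : (n : ℝ) ^ 3 ≤ n ^ 4 ∧ (n : ℝ) ^ 3 ≤ n ^ 6 := by
    rcases n.eq_zero_or_pos with rfl | hn
    · norm_num
    · have : (1 : ℝ) ≤ n := by exact_mod_cast hn
      exact ⟨pow_le_pow_right₀ this (by norm_num), pow_le_pow_right₀ this (by norm_num)⟩
  have hy : 0 ≤ (n : ℝ) ^ 2 * x := by positivity
  calc (n : ℝ) ^ 3 * ((K : ℝ) ^ 3 / (P : ℝ) ^ 2 + x ^ 3) ≤ n ^ 4 * x ^ 2 + n ^ 6 * x ^ 3 := by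
        rw [mul_add]
        exact add_le_add (mul_le_mul hn.1 hKx (by positivity) (by positivity))
          (mul_le_mul_of_nonneg_right hn.2 (by positivity))
    _ = ((n : ℝ) ^ 2 * x) ^ 2 + ((n : ℝ) ^ 2 * x) ^ 3 := by ring
    _ ≤ (1 + (n : ℝ) ^ 2 * x) ^ 3 := by nlinarith

theorem tendsto_natCast_sq_mul_atTop {K P : ℕ → ℕ} (hK : ∀ n, 0 < K n)
    (hcond : Tendsto (fun n : ℕ =>
        (n : ℝ) ^ 3 * ((K n : ℝ) ^ 3 / (P n : ℝ) ^ 2 + ((K n : ℝ) ^ 2 / (P n : ℝ)) ^ 3))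
      atTop atTop) :
    Tendsto (fun n : ℕ => (n : ℝ) ^ 2 * ((K n : ℝ) ^ 2 / P n)) atTop atTop := by
  have h : Tendsto (fun n : ℕ => 1 + (n : ℝ) ^ 2 * ((K n : ℝ) ^ 2 / P n)) atTop atTop :=
    (tendsto_atTop_mono (fun n => natCast_pow_three_mul_le n (K n) (P n) (hK n)) hcond).atTop_of_pow
      three_ne_zero fun n => by positivity
  simpa using tendsto_atTop_add_const_left atTop (-1) h

theorem ratio_powers_to_zero_general (K P : ℕ → ℕ)
    (hK : ∀ n, 0 < K n)
    (hcond : Tendsto (fun n : ℕ =>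
        (n : ℝ) ^ 3 * ((K n : ℝ) ^ 3 / (P n : ℝ) ^ 2 + ((K n : ℝ) ^ 2 / (P n : ℝ)) ^ 3))
      atTop atTop)
    (a b : ℝ) (hb : 0 < b) (hab : 0 ≤ a - 3 * b + 1) :
    Tendsto (fun n : ℕ =>
        (1 / (n : ℝ) ^ 2) * ((1 - qKP (K n) (P n)) ^ a / (betaKP (K n) (P n)) ^ b))
      atTop (nhds 0) := by
  have hsq : Tendsto (fun n : ℕ => (n : ℝ) ^ 2) atTop atTop :=
    (tendsto_pow_atTop two_ne_zero).comp tendsto_natCast_atTop_atTop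
  have hbound := hsq.inv_tendsto_atTop.add (tendsto_natCast_sq_mul_atTop hK hcond).inv_tendsto_atTop
  rw [add_zero] at hbound
  refine squeeze_zero (fun n => ?_) (fun n => ?_) hbound
  · have h1q := sub_nonneg.2 (qKP_lt_one (P := P n) (hK n)).le
    have hβ := (pow_nonneg h1q 3).trans (pow_three_one_sub_qKP_le_betaKP (K n) (P n))
    positivity
  · calc 1 / (n : ℝ) ^ 2 * ((1 - qKP (K n) (P n)) ^ a / betaKP (K n) (P n) ^ b)
        ≤ 1 / (n : ℝ) ^ 2 * (1 + ((K n : ℝ) ^ 2 / P n)⁻¹) :=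
          mul_le_mul_of_nonneg_left
            (one_sub_qKP_rpow_div_betaKP_rpow_le (hK n) hb.le (by linarith)) (by positivity)
      _ = _ := by simp only [Pi.inv_apply, mul_inv]; ring

theorem ratio_powers_to_zero (K P : ℕ → ℕ)
    (hK : ∀ n, 0 < K n) (hKP : ∀ n, K n ≤ P n)
    (hlim : Tendsto (fun n => ((K n : ℝ) ^ 2) / (P n : ℝ)) atTop (nhds 0))
    (hcond : Tendsto (fun n : ℕ =>
        (n : ℝ) ^ 3 * ((K n : ℝ) ^ 3 / (P n : ℝ) ^ 2 + ((K n : ℝ) ^ 2 / (P n : ℝ)) ^ 3))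
      atTop atTop)
    (a b : ℝ) (ha : 0 < a) (hb : 0 < b) (hab : 0 ≤ a - 3 * b + 1) :
    Tendsto (fun n : ℕ =>
        (1 / (n : ℝ) ^ 2) * ((1 - qKP (K n) (P n)) ^ a / (betaKP (K n) (P n)) ^ b))
      atTop (nhds 0) :=
  ratio_powers_to_zero_general K P hK hcond a b hb hab
end
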